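/- arXiv:2403.10889 — 6 statements merged into one kernel-verified Lean document; each statement's English description precedes it below -/
import Mathlib

section
/- Let c_b, c_{b'} : [n] → finset Y with |c_b(i)| = |c_{b'}(i)| = k for all i, and let p ∈ Y^n be such that p_i ∈ c_b(i) iff b_i = 1 and p_i ∈ c_{b'}(i) iff b'_i = 1, for b, b' ∈ {0,1}^n. Define A_b = {y ∈ Y^n : ∀ i, y_i ∈ c_b(i)} and similarly A_{b'}. Then |A_b ∩ A_{b'}| ≤ k^n · ((k-1)/k)^{d_H(b,b')}, where d_H is the Hamming distance. -/
/-- bound on `|A_b ∩ A_{b'}|` in terms of the Hamming distance of `b, b'`. -/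
theorem stmt_1 {Y : Type*} [DecidableEq Y] (n k : ℕ) (hk : 1 ≤ k)
    (c : (Fin n → Bool) → Fin n → Finset Y) (b b' : Fin n → Bool)
    (hcb : ∀ i, (c b i).card = k) (hcb' : ∀ i, (c b' i).card = k)
    (p : Fin n → Y)
    (hpb : ∀ i, p i ∈ c b i ↔ b i = true)
    (hpb' : ∀ i, p i ∈ c b' i ↔ b' i = true) :
    (((Fintype.piFinset fun i => c b i) ∩ (Fintype.piFinset fun i => c b' i)).card : ℝ)
      ≤ (k : ℝ) ^ n *
        (((k : ℝ) - 1) / k) ^ ((Finset.univ.filter fun i => b i ≠ b' i).card) := by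
  classical
  have hkpos : (0 : ℝ) < k := by exact_mod_cast hk
  have hinter : (Fintype.piFinset fun i => c b i) ∩ (Fintype.piFinset fun i => c b' i)
      = Fintype.piFinset fun i => c b i ∩ c b' i := by
    ext f
    simp [Fintype.mem_piFinset, forall_and]
  rw [hinter, Fintype.card_piFinset]
  -- bound each factor
  have hbound : ∀ i : Fin n, ((c b i ∩ c b' i).card : ℝ)
      ≤ (k : ℝ) * (if b i ≠ b' i then ((k : ℝ) - 1) / k else 1) := by
    intro i
    by_cases h : b i = b' i
    · simp only [h, ne_eq, not_true_eq_false, if_false, mul_one]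
      have := Finset.card_le_card (Finset.inter_subset_left (s₁ := c b i) (s₂ := c b' i))
      rw [hcb i] at this
      exact_mod_cast this
    · simp only [ne_eq, h, not_false_eq_true, if_true]
      rw [mul_div_assoc']
      rw [mul_comm, mul_div_assoc, div_self (ne_of_gt hkpos), mul_one]
      -- intersection card ≤ k - 1
      have hcard : (c b i ∩ c b' i).card ≤ k - 1 := by
        cases hbv : b i with
        | false =>
          have hb' : b' i = true := by
            cases hbv' : b' i
            · exact absurd (hbv.trans hbv'.symm) h
            · rfl
          have hp1 : p i ∉ c b i := by simp [hpb i, hbv]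
          have hp2 : p i ∈ c b' i := (hpb' i).2 hb'
          have hsub : c b i ∩ c b' i ⊆ (c b' i).erase (p i) := by
            intro y hy
            rw [Finset.mem_erase]
            refine ⟨?_, (Finset.mem_inter.1 hy).2⟩
            rintro rfl; exact hp1 (Finset.mem_inter.1 hy).1
          calc (c b i ∩ c b' i).card ≤ ((c b' i).erase (p i)).card :=
                Finset.card_le_card hsub
            _ = (c b' i).card - 1 := Finset.card_erase_of_mem hp2
            _ = k - 1 := by rw [hcb' i]
        | true =>
          have hb' : b' i = false := by
            cases hbv' : b' i
            · rfl
            · exact absurd (hbv.trans hbv'.symm) h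
          have hp1 : p i ∉ c b' i := by simp [hpb' i, hb']
          have hp2 : p i ∈ c b i := (hpb i).2 hbv
          have hsub : c b i ∩ c b' i ⊆ (c b i).erase (p i) := by
            intro y hy
            rw [Finset.mem_erase]
            refine ⟨?_, (Finset.mem_inter.1 hy).1⟩
            rintro rfl; exact hp1 (Finset.mem_inter.1 hy).2
          calc (c b i ∩ c b' i).card ≤ ((c b i).erase (p i)).card :=
                Finset.card_le_card hsub
            _ = (c b i).card - 1 := Finset.card_erase_of_mem hp2
            _ = k - 1 := by rw [hcb i]
      have : ((c b i ∩ c b' i).card : ℝ) ≤ ((k - 1 : ℕ) : ℝ) := by exact_mod_cast hcard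
      calc ((c b i ∩ c b' i).card : ℝ) ≤ ((k - 1 : ℕ) : ℝ) := this
        _ ≤ (k : ℝ) - 1 := by
            rw [Nat.cast_sub hk]; simp
  calc ((∏ i, (c b i ∩ c b' i).card : ℕ) : ℝ)
      = ∏ i, ((c b i ∩ c b' i).card : ℝ) := by push_cast; ring
    _ ≤ ∏ i, (k : ℝ) * (if b i ≠ b' i then ((k : ℝ) - 1) / k else 1) := by
        apply Finset.prod_le_prod
        · intro i _; positivity
        · intro i _; exact hbound i
    _ = (k : ℝ) ^ n * (((k : ℝ) - 1) / k) ^ ((Finset.univ.filter fun i => b i ≠ b' i).card) := by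
        rw [Finset.prod_mul_distrib, Finset.prod_const, Finset.card_univ, Fintype.card_fin]
        congr 1
        rw [Finset.prod_ite, Finset.prod_const, Finset.prod_const, one_pow, mul_one]
end

section
/- Let {A_b}_{b ∈ {0,1}^n} be a family of finite sets with |A_b| ≥ k^n for all b and |A_b ∩ A_{b'}| ≤ k^n · ((k-1)/k)^{d_H(b,b')} for all b ≠ b'. Then |⋃_{b ∈ {0,1}^n} A_b| ≥ (k^n / 4) · (2k/(2k-1))^n. -/
/-- algebra helper: from `N ≤ u² + uD` and `N ≤ D²` conclude `N ≤ 4uD`. -/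
lemma stmt4_aux_alg (u D N : ℝ) (hu0 : 0 ≤ u) (hD0 : 0 < D)
    (h1 : N ≤ u * u + u * D) (h2 : N ≤ D ^ 2) : N ≤ u * (4 * D) := by
  by_contra hcon
  push_neg at hcon
  have hN0 : 0 < N := by nlinarith
  have huD : u * D < N / 4 := by nlinarith
  have hu4 : u < D / 4 := by nlinarith
  have : u * u < N / 16 := by nlinarith
  linarith

/-- sum over all `b'` of `r ^ (Hamming distance to b)` equals `(1+r)^n`. -/
lemma stmt4_aux_sum_dist (n : ℕ) (r : ℝ) (b : Fin n → Bool) :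
    ∑ b' : Fin n → Bool,
      r ^ ((Finset.univ.filter fun i => b i ≠ b' i).card) = (1 + r) ^ n := by
  have h1 : ∀ b' : Fin n → Bool,
      r ^ ((Finset.univ.filter fun i => b i ≠ b' i).card)
        = ∏ i : Fin n, (if b i ≠ b' i then r else 1) := by
    intro b'
    rw [Finset.prod_ite, Finset.prod_const, Finset.prod_const, one_pow, mul_one]
  simp_rw [h1]
  have key := Finset.prod_univ_sum (fun _ : Fin n => (Finset.univ : Finset Bool))
    (fun i x => if b i ≠ x then r else 1)
  rw [Fintype.piFinset_univ] at key
  rw [← key]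
  have h2 : ∀ i : Fin n, (∑ x : Bool, if b i ≠ x then r else 1) = 1 + r := by
    intro i; cases hb : b i <;> simp [Fintype.sum_bool, hb, add_comm]
  simp_rw [h2, Finset.prod_const, Finset.card_univ, Fintype.card_fin]

/-- union lower bound for a family `{A_b}_{b ∈ {0,1}^n}` with
`|A_b| ≥ k^n` and `|A_b ∩ A_{b'}| ≤ k^n ((k-1)/k)^{d_H(b,b')}`. -/
theorem stmt_4 {α : Type*} [DecidableEq α] (n k : ℕ) (hk : 1 ≤ k)
    (A : (Fin n → Bool) → Finset α)
    (hA : ∀ b, (k : ℝ) ^ n ≤ ((A b).card : ℝ))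
    (hAB : ∀ b b', b ≠ b' → ((A b ∩ A b').card : ℝ)
      ≤ (k : ℝ) ^ n *
          (((k : ℝ) - 1) / k) ^ ((Finset.univ.filter fun i => b i ≠ b' i).card)) :
    ((k : ℝ) ^ n / 4) * ((2 * (k : ℝ)) / (2 * k - 1)) ^ n
      ≤ ((Finset.univ.biUnion A).card : ℝ) := by
  set U := Finset.univ.biUnion A with hU
  have hsub : ∀ b, A b ⊆ U := fun b => Finset.subset_biUnion_of_mem A (Finset.mem_univ b)
  have hcard2 : (Finset.univ : Finset (Fin n → Bool)).card = 2 ^ n := by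
    simp [Finset.card_univ]
  rcases eq_or_lt_of_le hk with hk1 | hk2
  · -- k = 1 : the sets are pairwise disjoint
    have hk1 : k = 1 := hk1.symm
    subst hk1
    have hdisj : ∀ b ∈ (Finset.univ : Finset (Fin n → Bool)), ∀ b' ∈ Finset.univ,
        b ≠ b' → Disjoint (A b) (A b') := by
      intro b _ b' _ hne
      have hd : 1 ≤ (Finset.univ.filter fun i => b i ≠ b' i).card := by
        rcases Function.ne_iff.mp hne with ⟨i, hi⟩
        exact Finset.card_pos.mpr ⟨i, Finset.mem_filter.mpr ⟨Finset.mem_univ i, hi⟩⟩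
      have hb := hAB b b' hne
      simp only [Nat.cast_one, one_pow, sub_self, zero_div, one_mul] at hb
      rw [zero_pow (by omega)] at hb
      have hc : (A b ∩ A b').card = 0 := by
        exact_mod_cast le_antisymm (by exact_mod_cast hb) (Nat.zero_le _)
      rw [Finset.disjoint_iff_inter_eq_empty]
      exact Finset.card_eq_zero.mp hc
    have hcard : U.card = ∑ b : Fin n → Bool, (A b).card := Finset.card_biUnion hdisj
    have h1 : ∀ b, 1 ≤ (A b).card := by
      intro b
      have := hA b
      simp only [Nat.cast_one, one_pow] at this
      exact_mod_cast this
    have hge : 2 ^ n ≤ U.card := by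
      rw [hcard]
      calc (2:ℕ) ^ n = ∑ _b : Fin n → Bool, 1 := by rw [Finset.sum_const, hcard2]; simp
        _ ≤ _ := Finset.sum_le_sum fun b _ => h1 b
    have h2 : (2:ℝ) ^ n ≤ (U.card : ℝ) := by exact_mod_cast hge
    have h2n : (0:ℝ) < 2 ^ n := by positivity
    have : ((1:ℕ) : ℝ) = 1 := by norm_num
    calc ((1:ℕ):ℝ) ^ n / 4 * (2 * ((1:ℕ):ℝ) / (2 * ((1:ℕ):ℝ) - 1)) ^ n
        = (2:ℝ) ^ n / 4 := by norm_num; ring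
      _ ≤ (2:ℝ) ^ n := by linarith
      _ ≤ _ := h2
  · -- k ≥ 2
    have hk2' : 2 ≤ k := hk2
    have hK2 : (2:ℝ) ≤ (k:ℝ) := by exact_mod_cast hk2'
    set K := (k:ℝ) with hKdef
    have hK0 : (0:ℝ) < K := by linarith
    set r := (K - 1)/K with hr
    have hr0 : 0 ≤ r := div_nonneg (by linarith) hK0.le
    set u := (U.card : ℝ) with hu
    have hu0 : 0 ≤ u := by positivity
    set f : α → ℝ := fun x => ∑ b : Fin n → Bool, (if x ∈ A b then (1:ℝ) else 0) with hf
    have h1 : ∑ x ∈ U, f x = ∑ b : Fin n → Bool, ((A b).card : ℝ) := by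
      rw [Finset.sum_comm]
      refine Finset.sum_congr rfl fun b _ => ?_
      rw [Finset.sum_ite_mem, Finset.inter_eq_right.mpr (hsub b), Finset.sum_const, nsmul_eq_mul,
        mul_one]
    have h2 : ∑ x ∈ U, f x ^ 2
        = ∑ b : Fin n → Bool, ∑ b' : Fin n → Bool, ((A b ∩ A b').card : ℝ) := by
      have hfx : ∀ x, f x ^ 2 = ∑ b : Fin n → Bool, ∑ b' : Fin n → Bool,
          (if x ∈ A b ∩ A b' then (1:ℝ) else 0) := by
        intro x
        rw [sq, hf, Finset.sum_mul_sum]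
        refine Finset.sum_congr rfl fun b _ => Finset.sum_congr rfl fun b' _ => ?_
        rw [ite_zero_mul_ite_zero]
        simp [Finset.mem_inter]
      simp_rw [hfx]
      rw [Finset.sum_comm]
      refine Finset.sum_congr rfl fun b _ => ?_
      rw [Finset.sum_comm]
      refine Finset.sum_congr rfl fun b' _ => ?_
      rw [Finset.sum_ite_mem,
        Finset.inter_eq_right.mpr ((Finset.inter_subset_left).trans (hsub b)),
        Finset.sum_const, nsmul_eq_mul, mul_one]
    have hCS : (∑ b : Fin n → Bool, ((A b).card : ℝ)) ^ 2 ≤ u * ∑ x ∈ U, f x ^ 2 := by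
      rw [← h1, hu]
      exact sq_sum_le_card_mul_sum_sq
    have hlow : (2:ℝ) ^ n * K ^ n ≤ ∑ b : Fin n → Bool, ((A b).card : ℝ) := by
      calc (2:ℝ) ^ n * K ^ n = ∑ _b : Fin n → Bool, K ^ n := by
            rw [Finset.sum_const, hcard2]; push_cast; ring
        _ ≤ _ := Finset.sum_le_sum fun b _ => hA b
    have hS : ∑ b : Fin n → Bool, ∑ b' : Fin n → Bool, ((A b ∩ A b').card : ℝ)
        ≤ 2 ^ n * u + 2 ^ n * (2 * K - 1) ^ n := by
      have hterm : ∀ b b' : Fin n → Bool, ((A b ∩ A b').card : ℝ)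
          ≤ (if b = b' then u else 0)
            + K ^ n * r ^ ((Finset.univ.filter fun i => b i ≠ b' i).card) := by
        intro b b'
        by_cases h : b = b'
        · subst h
          rw [if_pos rfl]
          have hle : ((A b ∩ A b).card : ℝ) ≤ u := by
            rw [hu]
            exact_mod_cast Finset.card_le_card ((Finset.inter_subset_left).trans (hsub b))
          have hnn : 0 ≤ K ^ n * r ^ ((Finset.univ.filter fun i => b i ≠ b i).card) :=
            mul_nonneg (pow_nonneg hK0.le n) (pow_nonneg hr0 _)
          linarith
        · rw [if_neg h, zero_add]
          exact hAB b b' h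
      calc ∑ b : Fin n → Bool, ∑ b' : Fin n → Bool, ((A b ∩ A b').card : ℝ)
          ≤ ∑ b : Fin n → Bool, ∑ b' : Fin n → Bool, ((if b = b' then u else 0)
            + K ^ n * r ^ ((Finset.univ.filter fun i => b i ≠ b' i).card)) :=
            Finset.sum_le_sum fun b _ => Finset.sum_le_sum fun b' _ => hterm b b'
        _ = 2 ^ n * u + 2 ^ n * (2 * K - 1) ^ n := by
            simp_rw [Finset.sum_add_distrib, Finset.sum_ite_eq, Finset.mem_univ, if_pos,
              ← Finset.mul_sum, stmt4_aux_sum_dist n r]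
            rw [Finset.sum_const, Finset.sum_const, hcard2]
            have h1r : K ^ n * (1 + r) ^ n = (2 * K - 1) ^ n := by
              rw [← mul_pow]
              congr 1
              rw [hr]; field_simp; ring
            rw [nsmul_eq_mul, nsmul_eq_mul]
            push_cast
            rw [← h1r]; ring
    have hmain2 : (2:ℝ) ^ n * K ^ n * K ^ n ≤ u * u + u * (2 * K - 1) ^ n := by
      have hchain := hCS.trans (mul_le_mul_of_nonneg_left (h2 ▸ hS) hu0)
      have hsq : ((2:ℝ) ^ n * K ^ n) ^ 2 ≤ (∑ b : Fin n → Bool, ((A b).card : ℝ)) ^ 2 :=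
        pow_le_pow_left₀ (by positivity) hlow 2
      have h2n : (0:ℝ) < 2 ^ n := by positivity
      nlinarith [hchain, hsq]
    have hD0 : (0:ℝ) < (2 * K - 1) ^ n := pow_pos (by linarith) n
    have hDN : (2:ℝ) ^ n * K ^ n * K ^ n ≤ ((2 * K - 1) ^ n) ^ 2 := by
      have hpt : (2:ℝ) * (K * K) ≤ (2 * K - 1) ^ 2 := by nlinarith
      calc (2:ℝ) ^ n * K ^ n * K ^ n = (2 * (K * K)) ^ n := by rw [mul_pow, mul_pow]; ring
        _ ≤ ((2 * K - 1) ^ 2) ^ n := pow_le_pow_left₀ (by positivity) hpt n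
        _ = ((2 * K - 1) ^ n) ^ 2 := by rw [← pow_mul, ← pow_mul, Nat.mul_comm]
    rw [div_pow, div_mul_div_comm, div_le_iff₀ (by positivity)]
    have hEq : K ^ n * (2 * K) ^ n = (2:ℝ) ^ n * K ^ n * K ^ n := by rw [mul_pow]; ring
    rw [hEq]
    exact stmt4_aux_alg u ((2 * K - 1) ^ n) _ hu0 hD0 hmain2 hDN
end

section
/- If every h in a product class F ⊗ G restricted to the diagonal sample S = {(u_i, v_i)}_{i=1}^n has the property that neighbors multiply, then DS_{k·k'}(F ⊗ G) ≥ min(DS_k(F), DS_{k'}(G)), where DS_k denotes the k-DS dimension. -/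
/-- `y'` is an `i`-neighbor of `y`: they differ exactly at coordinate `i`. -/
def Neighbor {n : ℕ} {Y : Type*} (y y' : Fin n → Y) (i : Fin n) : Prop :=
  y i ≠ y' i ∧ ∀ j, j ≠ i → y j = y' j

/-- `B` is a (nonempty) pseudo-cube of rank `k`: every element has at least `k`
distinct neighbors in `B` in every direction. -/
def IsPseudoCube {n : ℕ} {Y : Type*} (k : ℕ) (B : Set (Fin n → Y)) : Prop :=
  B.Nonempty ∧ ∀ y ∈ B, ∀ i : Fin n, ∃ N : Finset (Fin n → Y),
    ↑N ⊆ B ∧ k ≤ N.card ∧ ∀ y' ∈ N, Neighbor y y' i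

/-- The sequence `x : Fin n → X` is `DS_k`-shattered by `C`. -/
def DSShatters {X Y : Type*} (k : ℕ) (C : Set (X → Y)) {n : ℕ} (x : Fin n → X) : Prop :=
  ∃ B : Set (Fin n → Y), B ⊆ {p | ∃ c ∈ C, ∀ i, p i = c (x i)} ∧ IsPseudoCube k B

/-- The `k`-DS dimension of a class (as an extended natural number). -/
noncomputable def DSdim {X Y : Type*} (k : ℕ) (C : Set (X → Y)) : ℕ∞ :=
  ⨆ n ∈ {n : ℕ | ∃ x : Fin n → X, DSShatters k C x}, (n : ℕ∞)

/-- The product class `F ⊗ G`. -/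
def prodClass {X V Y Z : Type*} (F : Set (X → Y)) (G : Set (V → Z)) :
    Set (X × V → Y × Z) :=
  {h | ∃ f ∈ F, ∃ g ∈ G, h = fun p => (f p.1, g p.2)}

lemma shatters_zero {X Y : Type*} (k : ℕ) (C : Set (X → Y)) (hC : C.Nonempty) :
    ∃ x : Fin 0 → X, DSShatters k C x := by
  obtain ⟨c, hc⟩ := hC
  exact ⟨Fin.elim0, Set.univ, fun p _ => ⟨c, hc, fun i => i.elim0⟩,
    ⟨Fin.elim0, trivial⟩, fun y _ i => i.elim0⟩

lemma shatters_mono {X Y : Type*} (k : ℕ) (C : Set (X → Y)) {n m : ℕ} (h : n ≤ m)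
    {x : Fin m → X} (hx : DSShatters k C x) :
    ∃ x' : Fin n → X, DSShatters k C x' := by
  classical
  obtain ⟨B, hB, hBne, hcube⟩ := hx
  refine ⟨x ∘ Fin.castLE h, (fun y => y ∘ Fin.castLE h) '' B, ?_, hBne.image _, ?_⟩
  · rintro _ ⟨y, hy, rfl⟩
    obtain ⟨c, hc, hcy⟩ := hB hy
    exact ⟨c, hc, fun i => hcy _⟩
  · rintro _ ⟨y, hy, rfl⟩ i
    obtain ⟨N, hNB, hNcard, hNnb⟩ := hcube y hy (Fin.castLE h i)
    refine ⟨N.image (fun y' => y' ∘ Fin.castLE h), ?_, ?_, ?_⟩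
    · intro z hz
      simp only [Finset.coe_image, Set.mem_image, Finset.mem_coe] at hz
      obtain ⟨y', hy', rfl⟩ := hz
      exact ⟨y', hNB hy', rfl⟩
    · rw [Finset.card_image_of_injOn ?_]
      · exact hNcard
      · intro a ha b hb hab
        have hna := hNnb a ha
        have hnb := hNnb b hb
        funext j
        by_cases hj : j = Fin.castLE h i
        · subst hj
          exact congrFun hab i
        · rw [← hna.2 j hj, ← hnb.2 j hj]
    · intro z hz
      simp only [Finset.mem_image] at hz
      obtain ⟨y', hy', rfl⟩ := hz
      have hn := hNnb y' hy'
      refine ⟨hn.1, fun j hj => hn.2 _ fun hc => hj ?_⟩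
      exact Fin.castLE_injective h hc

lemma shatters_prod {X V Y Z : Type*} (k k' : ℕ) (F : Set (X → Y)) (G : Set (V → Z))
    {n : ℕ} {x : Fin n → X} {v : Fin n → V}
    (hx : DSShatters k F x) (hv : DSShatters k' G v) :
    DSShatters (k * k') (prodClass F G) (fun i => (x i, v i)) := by
  classical
  obtain ⟨B, hB, hBne, hBcube⟩ := hx
  obtain ⟨B', hB', hB'ne, hB'cube⟩ := hv
  set pair : (Fin n → Y) × (Fin n → Z) → (Fin n → Y × Z) :=
    fun bb j => (bb.1 j, bb.2 j) with hpair
  have hpinj : Function.Injective pair := by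
    intro a b hab
    have h1 : a.1 = b.1 := funext fun j => congrArg Prod.fst (congrFun hab j)
    have h2 : a.2 = b.2 := funext fun j => congrArg Prod.snd (congrFun hab j)
    exact Prod.ext h1 h2
  refine ⟨pair '' (B ×ˢ B'), ?_, ?_, ?_⟩
  · rintro _ ⟨⟨b, b'⟩, ⟨hb, hb'⟩, rfl⟩
    obtain ⟨f, hf, hfb⟩ := hB hb
    obtain ⟨g, hg, hgb⟩ := hB' hb'
    exact ⟨fun p => (f p.1, g p.2), ⟨f, hf, g, hg, rfl⟩, fun i =>
      Prod.ext (hfb i) (hgb i)⟩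
  · exact ⟨pair (hBne.some, hB'ne.some), ⟨_, ⟨hBne.some_mem, hB'ne.some_mem⟩, rfl⟩⟩
  · rintro _ ⟨⟨b, b'⟩, ⟨hb, hb'⟩, rfl⟩ i
    obtain ⟨N, hNB, hNc, hNnb⟩ := hBcube b hb i
    obtain ⟨N', hN'B, hN'c, hN'nb⟩ := hB'cube b' hb' i
    refine ⟨(N ×ˢ N').image pair, ?_, ?_, ?_⟩
    · intro z hz
      simp only [Finset.coe_image, Set.mem_image, Finset.mem_coe, Finset.mem_product] at hz
      obtain ⟨⟨a, a'⟩, ⟨ha, ha'⟩, rfl⟩ := hz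
      exact ⟨(a, a'), ⟨hNB ha, hN'B ha'⟩, rfl⟩
    · rw [Finset.card_image_of_injective _ hpinj, Finset.card_product]
      exact Nat.mul_le_mul hNc hN'c
    · intro z hz
      simp only [Finset.mem_image, Finset.mem_product] at hz
      obtain ⟨⟨a, a'⟩, ⟨ha, ha'⟩, rfl⟩ := hz
      have h1 := hNnb a ha
      have h2 := hN'nb a' ha'
      exact ⟨fun hc => h1.1 (congrArg Prod.fst hc), fun j hj =>
        Prod.ext (h1.2 j hj) (h2.2 j hj)⟩

lemma le_DSdim {X Y : Type*} {k n : ℕ} {C : Set (X → Y)}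
    (h : ∃ x : Fin n → X, DSShatters k C x) : (n : ℕ∞) ≤ DSdim k C :=
  le_iSup₂_of_le n h le_rfl

lemma exists_shatter {X Y : Type*} (k : ℕ) (C : Set (X → Y)) (hC : C.Nonempty)
    {n : ℕ} (hn : (n : ℕ∞) ≤ DSdim k C) : ∃ x : Fin n → X, DSShatters k C x := by
  cases n with
  | zero => exact shatters_zero k C hC
  | succ n =>
    by_contra hcon
    have hdim : DSdim k C ≤ (n : ℕ∞) := by
      rw [DSdim]
      refine iSup₂_le fun m hm => ?_
      rcases Nat.lt_or_ge m (n + 1) with h | h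
      · exact_mod_cast Nat.lt_succ_iff.mp h
      · obtain ⟨x, hx⟩ := hm
        exact absurd (shatters_mono k C h hx) hcon
    have hle := hn.trans hdim
    exact absurd (by exact_mod_cast hle) (Nat.not_succ_le_self n)

/-- `DS_{k·k'}(F ⊗ G) ≥ min(DS_k(F), DS_{k'}(G))` (diagonal-sample
argument: neighbors multiply). -/
theorem stmt_8 {X V Y Z : Type*} (k k' : ℕ) (hk : 1 ≤ k) (hk' : 1 ≤ k')
    (F : Set (X → Y)) (G : Set (V → Z)) (hF : F.Nonempty) (hG : G.Nonempty) :
    min (DSdim k F) (DSdim k' G) ≤ DSdim (k * k') (prodClass F G) := by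
  rcases le_total (DSdim k F) (DSdim k' G) with h | h
  · rw [min_eq_left h, DSdim]
    refine iSup₂_le fun n hn => ?_
    obtain ⟨x, hx⟩ := hn
    have hnG : (n : ℕ∞) ≤ DSdim k' G := (le_DSdim ⟨x, hx⟩).trans h
    obtain ⟨v, hv⟩ := exists_shatter k' G hG hnG
    exact le_DSdim ⟨_, shatters_prod k k' F G hx hv⟩
  · rw [min_eq_right h, DSdim]
    refine iSup₂_le fun n hn => ?_
    obtain ⟨v, hv⟩ := hn
    have hnF : (n : ℕ∞) ≤ DSdim k F := (le_DSdim ⟨v, hv⟩).trans h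
    obtain ⟨x, hx⟩ := exists_shatter k F hF hnF
    exact le_DSdim ⟨_, shatters_prod k k' F G hx hv⟩
end

section
/- If B ⊆ Y^n is a pseudo-cube of rank k (every element has at least k distinct neighbors in each direction) and B' ⊆ Z^m is a pseudo-cube of rank k', then the product set {((y,z) coordinate-wise pairing on the diagonal of length min(n,m)) : y ∈ B, z ∈ B'} ⊆ (Y × Z)^{min(n,m)} contains a pseudo-cube of rank k·k'. -/
/-- the diagonal pairing of a rank-`k` pseudo-cube `B ⊆ Y^n` and a
rank-`k'` pseudo-cube `B' ⊆ Z^m` contains a pseudo-cube of rank `k·k'` in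
`(Y × Z)^{min(n,m)}`. -/
theorem stmt_10 {Y Z : Type*} (n m k k' : ℕ)
    (B : Set (Fin n → Y)) (B' : Set (Fin m → Z))
    (hB : IsPseudoCube k B) (hB' : IsPseudoCube k' B') :
    ∃ P : Set (Fin (min n m) → Y × Z),
      P ⊆ {w | ∃ y ∈ B, ∃ z ∈ B', ∀ i : Fin (min n m),
            w i = (y (Fin.castLE (min_le_left n m) i), z (Fin.castLE (min_le_right n m) i))} ∧
      IsPseudoCube (k * k') P := by
  classical
  set F : (Fin n → Y) × (Fin m → Z) → (Fin (min n m) → Y × Z) :=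
    fun p j => (p.1 (Fin.castLE (min_le_left n m) j), p.2 (Fin.castLE (min_le_right n m) j))
    with hF
  refine ⟨{w | ∃ y ∈ B, ∃ z ∈ B', ∀ i : Fin (min n m),
            w i = (y (Fin.castLE (min_le_left n m) i), z (Fin.castLE (min_le_right n m) i))},
    subset_rfl, ?_, ?_⟩
  · obtain ⟨y, hy⟩ := hB.1
    obtain ⟨z, hz⟩ := hB'.1
    exact ⟨F (y, z), y, hy, z, hz, fun i => rfl⟩
  · rintro w ⟨y, hy, z, hz, hw⟩ i
    set i₁ := Fin.castLE (min_le_left n m) i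
    set i₂ := Fin.castLE (min_le_right n m) i
    obtain ⟨N, hNB, hNcard, hNnb⟩ := hB.2 y hy i₁
    obtain ⟨N', hN'B, hN'card, hN'nb⟩ := hB'.2 z hz i₂
    refine ⟨(N ×ˢ N').image F, ?_, ?_, ?_⟩
    · intro w' hw'
      simp only [Finset.coe_image, Set.mem_image, Finset.mem_coe, Finset.mem_product] at hw'
      obtain ⟨⟨a, b⟩, ⟨ha, hb⟩, rfl⟩ := hw'
      exact ⟨a, hNB ha, b, hN'B hb, fun j => rfl⟩
    · rw [Finset.card_image_of_injOn]
      · rw [Finset.card_product]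
        exact Nat.mul_le_mul hNcard hN'card
      · rintro ⟨a, b⟩ hab ⟨a', b'⟩ hab' heq
        simp only [Finset.mem_coe, Finset.mem_product] at hab hab'
        have h1 := hNnb a hab.1
        have h1' := hNnb a' hab'.1
        have h2 := hN'nb b hab.2
        have h2' := hN'nb b' hab'.2
        have hi := congrFun heq i
        simp only [hF, Prod.mk.injEq] at hi
        have haa : a = a' := by
          funext j
          by_cases hj : j = i₁
          · subst hj; exact hi.1
          · rw [← h1.2 j hj, ← h1'.2 j hj]
        have hbb : b = b' := by
          funext j
          by_cases hj : j = i₂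
          · subst hj; exact hi.2
          · rw [← h2.2 j hj, ← h2'.2 j hj]
        simp [haa, hbb]
    · intro w' hw'
      simp only [Finset.mem_image, Finset.mem_product] at hw'
      obtain ⟨⟨a, b⟩, ⟨ha, hb⟩, rfl⟩ := hw'
      have h1 := hNnb a ha
      have h2 := hN'nb b hb
      constructor
      · rw [hw i]
        exact fun h => h1.1 (congrArg Prod.fst h)
      · intro j hj
        rw [hw j]
        simp only [hF, Prod.mk.injEq]
        have hj1 : Fin.castLE (min_le_left n m) j ≠ i₁ := by
          simpa [i₁, Fin.ext_iff] using (fun h => hj (Fin.ext h))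
        have hj2 : Fin.castLE (min_le_right n m) j ≠ i₂ := by
          simpa [i₂, Fin.ext_iff] using (fun h => hj (Fin.ext h))
        exact ⟨h1.2 _ hj1, h2.2 _ hj2⟩
end

section
/- Let H be a finite set of (k+k')-list hypotheses h : U × V → (Y×Z choose k+k') covering the product F ⊗ G of two finite partial concept classes F ⊆ (Y ∪ {⋆})^U, G ⊆ (Z ∪ {⋆})^V with |U| = n ≤ |V| = n'. Then either F admits a k-list cover of size at most |H|, or G admits a k'-list cover of size at most n·|H|. Consequently min(C_F(n,k), C_G(n',k')) ≤ min(n,n') · C_{F⊗G}(n·n', k+k'). -/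
open Finset in
theorem stmt14_aux_card {Y Z : Type*} [DecidableEq Z] (k k' : ℕ) (hk' : 1 ≤ k')
    (A : Finset (Y × Z)) (hA : A.card = k + k') :
    ((A.filter (fun p => k + 1 ≤ (A.filter (fun q => q.2 = p.2)).card)).image
      Prod.snd).card ≤ k' := by
  classical
  set B := (A.filter (fun p => k + 1 ≤ (A.filter (fun q => q.2 = p.2)).card)).image
      Prod.snd with hBdef
  have hbig : ∀ z ∈ B, k + 1 ≤ (A.filter (fun q => q.2 = z)).card := by
    intro z hz
    obtain ⟨p, hp, hpz⟩ := Finset.mem_image.mp hz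
    obtain ⟨-, hle⟩ := Finset.mem_filter.mp hp
    rwa [hpz] at hle
  have hsum : ∑ z ∈ B, (A.filter (fun q => q.2 = z)).card ≤ A.card := by
    rw [← Finset.card_biUnion]
    · refine Finset.card_le_card ?_
      intro x hx
      obtain ⟨z, _, hz⟩ := Finset.mem_biUnion.mp hx
      exact (Finset.mem_filter.mp hz).1
    · intro z₁ _ z₂ _ hne
      refine Finset.disjoint_left.mpr ?_
      intro p hp₁ hp₂
      exact hne ((Finset.mem_filter.mp hp₁).2.symm.trans (Finset.mem_filter.mp hp₂).2)
  have h1 : (k + 1) * B.card ≤ k + k' := by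
    calc (k + 1) * B.card = ∑ _z ∈ B, (k + 1) := by
          rw [Finset.sum_const, smul_eq_mul, mul_comm]
      _ ≤ ∑ z ∈ B, (A.filter (fun q => q.2 = z)).card := Finset.sum_le_sum hbig
      _ ≤ A.card := hsum
      _ = k + k' := hA
  have hkk : k ≤ k * k' := Nat.le_mul_of_pos_right k hk'
  have h2 : k + k' ≤ (k + 1) * k' := by
    rw [add_mul, one_mul]
    exact Nat.add_le_add hkk (le_refl k')
  exact Nat.le_of_mul_le_mul_left (h1.trans h2) (Nat.succ_pos k)

/-- main direct-sum dichotomy for covers: if a family `H` of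
`(k+k')`-list hypotheses covers the product `F ⊗ G` of two finite partial concept
classes over domains `U` (of size `n`) and `V` (of size `n' ≥ n`), then either `F`
has a `k`-list cover of size at most `|H|`, or `G` has a `k'`-list cover of size at
most `n·|H|`. -/
theorem stmt_14 {U V Y Z : Type*} [Fintype U] [Fintype V]
    (n n' k k' : ℕ) (hk : 1 ≤ k) (hk' : 1 ≤ k')
    (hU : Fintype.card U = n) (hV : Fintype.card V = n') (hle : n ≤ n')
    (F : Set (U → Option Y)) (G : Set (V → Option Z))
    (hF : F.Finite) (hG : G.Finite)
    (N : ℕ) (H : Fin N → U × V → Finset (Y × Z))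
    (hHcard : ∀ i p, (H i p).card = k + k')
    (hHcov : ∀ f ∈ F, ∀ g ∈ G, ∃ i, ∀ (u : U) (v : V) (y : Y) (z : Z),
      f u = some y → g v = some z → (y, z) ∈ H i (u, v)) :
    (∃ H₁ : Fin N → U → Finset Y,
        (∀ i u, (H₁ i u).card ≤ k) ∧
        ∀ f ∈ F, ∃ i, ∀ (u : U) (y : Y), f u = some y → y ∈ H₁ i u) ∨
      (∃ H₂ : Fin (n * N) → V → Finset Z,
        (∀ i v, (H₂ i v).card ≤ k') ∧
        ∀ g ∈ G, ∃ i, ∀ (v : V) (z : Z), g v = some z → z ∈ H₂ i v) := by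
  classical
  rcases F.eq_empty_or_nonempty with hFe | hFne
  · left
    exact ⟨fun _ _ => ∅, fun _ _ => by simp, by simp [hFe]⟩
  rcases G.eq_empty_or_nonempty with hGe | hGne
  · right
    exact ⟨fun _ _ => ∅, fun _ _ => by simp, by simp [hGe]⟩
  by_cases hmain : ∃ g ∈ G, ∀ (i : Fin N) (u : U), ∃ (v : V) (z : Z),
      g v = some z ∧ ((H i (u, v)).filter (fun p => p.2 = z)).card ≤ k
  · -- slices give a k-list cover of F
    obtain ⟨g, hg, hprop⟩ := hmain
    choose vf zf hgz hsmall using hprop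
    left
    refine ⟨fun i u => ((H i (u, vf i u)).filter (fun p => p.2 = zf i u)).image Prod.fst,
      ?_, ?_⟩
    · intro i u
      exact le_trans Finset.card_image_le (hsmall i u)
    · intro f hf
      obtain ⟨i, hi⟩ := hHcov f hf g hg
      refine ⟨i, fun u y hy => ?_⟩
      exact Finset.mem_image.mpr ⟨(y, zf i u),
        Finset.mem_filter.mpr ⟨hi u (vf i u) y (zf i u) hy (hgz i u), rfl⟩, rfl⟩
  · -- big slices give a k'-list cover of G of size n·N
    push_neg at hmain
    right
    have e : Fin N × U ≃ Fin (n * N) :=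
      Fintype.equivFinOfCardEq (by simp [hU, Nat.mul_comm])
    refine ⟨fun j v =>
      ((H (e.symm j).1 ((e.symm j).2, v)).filter
        (fun p => k + 1 ≤ ((H (e.symm j).1 ((e.symm j).2, v)).filter
          (fun q => q.2 = p.2)).card)).image Prod.snd, ?_, ?_⟩
    · intro j v
      exact stmt14_aux_card k k' hk' _ (hHcard _ _)
    · intro g hg
      obtain ⟨i, u, hbig⟩ := hmain g hg
      refine ⟨e (i, u), fun v z hz => ?_⟩
      have hb : k + 1 ≤ ((H i (u, v)).filter (fun q => q.2 = z)).card := hbig v z hz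
      have hpos : 0 < ((H i (u, v)).filter (fun q => q.2 = z)).card :=
        lt_of_lt_of_le (Nat.succ_pos k) hb
      obtain ⟨p, hp⟩ := Finset.card_pos.mp hpos
      obtain ⟨hpH, hpz⟩ := Finset.mem_filter.mp hp
      simp only [Equiv.symm_apply_apply]
      refine Finset.mem_image.mpr ⟨p, Finset.mem_filter.mpr ⟨hpH, ?_⟩, hpz⟩
      rwa [hpz]
end

section
/- Realizable compressibility implies agnostic compressibility: if (ρ, κ) is a k-list sample compression scheme for a class C that is correct on all C-realizable samples, then the scheme obtained by compressing a maximum-size realizable subsample satisfies, for every sample S, L_S(ρ(κ(S'))) ≤ inf_{c∈C} L_S(c), where S' is a maximum C-realizable subsample of S and L_S(h) = (1/|S|)·|{(x,y) ∈ S : y ∉ h(x)}|. -/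
/-- realizable compressibility implies agnostic compressibility.
If `A = ρ ∘ κ` is a `k`-list compression scheme that is consistent on every
`C`-realizable sample, then applying it to a maximum-size `C`-realizable
subsample `S'` of an arbitrary sample `S` gives `L_S(A(S')) ≤ inf_{c ∈ C} L_S(c)`. -/
theorem stmt_16 {X Y : Type*} [DecidableEq Y] (C : Set (X → Y)) (k : ℕ) (hk : 1 ≤ k)
    (A : ∀ m : ℕ, (Fin m → X × Y) → X → Finset Y)
    (hAk : ∀ m S x, (A m S x).card = k)
    (hAcons : ∀ (m : ℕ) (S : Fin m → X × Y),
      (∃ c ∈ C, ∀ j, c (S j).1 = (S j).2) → ∀ j, (S j).2 ∈ A m S (S j).1)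
    (n : ℕ) (S : Fin n → X × Y) (J : Finset (Fin n))
    (hJreal : ∃ c ∈ C, ∀ j ∈ J, c (S j).1 = (S j).2)
    (hJmax : ∀ J' : Finset (Fin n),
      (∃ c ∈ C, ∀ j ∈ J', c (S j).1 = (S j).2) → J'.card ≤ J.card) :
    ∀ c ∈ C,
      ((Finset.univ.filter fun j : Fin n =>
          (S j).2 ∉ A J.card (fun i => S ↑(J.orderIsoOfFin rfl i)) (S j).1).card : ℝ) / n
        ≤ ((Finset.univ.filter fun j : Fin n => c (S j).1 ≠ (S j).2).card : ℝ) / n := by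
  intro c hc
  -- The subsample indexed by J is realizable, so A is consistent on it.
  obtain ⟨c₀, hc₀, hc₀J⟩ := hJreal
  set S' : Fin J.card → X × Y := fun i => S ↑(J.orderIsoOfFin rfl i) with hS'
  have hcons : ∀ i, (S' i).2 ∈ A J.card S' (S' i).1 := by
    apply hAcons
    exact ⟨c₀, hc₀, fun i => hc₀J _ (J.orderIsoOfFin rfl i).2⟩
  -- hence every j ∈ J is correctly predicted by A
  have hJgood : ∀ j ∈ J, (S j).2 ∈ A J.card S' (S j).1 := by
    intro j hj
    have h := hcons ((J.orderIsoOfFin rfl).symm ⟨j, hj⟩)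
    have e : J.orderIsoOfFin rfl ((J.orderIsoOfFin rfl).symm ⟨j, hj⟩) = ⟨j, hj⟩ :=
      (J.orderIsoOfFin rfl).apply_symm_apply ⟨j, hj⟩
    simp only [hS', e] at h
    exact h
  -- error set of A is contained in Jᶜ
  have hsub : (Finset.univ.filter fun j : Fin n =>
      (S j).2 ∉ A J.card S' (S j).1) ⊆ Jᶜ := by
    intro j hj
    simp only [Finset.mem_filter, Finset.mem_univ, true_and] at hj
    simp only [Finset.mem_compl]
    exact fun hjJ => hj (hJgood j hjJ)
  have h1 : (Finset.univ.filter fun j : Fin n =>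
      (S j).2 ∉ A J.card S' (S j).1).card ≤ n - J.card := by
    have := Finset.card_le_card hsub
    simpa [Finset.card_compl] using this
  -- the set of indices where c is correct is realizable, so has card ≤ |J|
  have h2 : (Finset.univ.filter fun j : Fin n => c (S j).1 = (S j).2).card ≤ J.card := by
    apply hJmax
    exact ⟨c, hc, fun j hj => by simpa using (Finset.mem_filter.mp hj).2⟩
  have h3 : n - J.card ≤ (Finset.univ.filter fun j : Fin n => c (S j).1 ≠ (S j).2).card := by
    have hcompl : (Finset.univ.filter fun j : Fin n => c (S j).1 ≠ (S j).2)
        = (Finset.univ.filter fun j : Fin n => c (S j).1 = (S j).2)ᶜ := by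
      ext j; simp
    rw [hcompl, Finset.card_compl]
    simp only [Fintype.card_fin]
    omega
  have hfinal : (Finset.univ.filter fun j : Fin n =>
      (S j).2 ∉ A J.card S' (S j).1).card
      ≤ (Finset.univ.filter fun j : Fin n => c (S j).1 ≠ (S j).2).card :=
    le_trans h1 h3
  have hn : (0:ℝ) ≤ n := Nat.cast_nonneg n
  rcases eq_or_lt_of_le hn with h0 | h0
  · simp [← h0]
  · exact by gcongr <;> exact_mod_cast hfinal
end
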